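/- arXiv:2506.24067 — 2 statements merged into one kernel-verified Lean document; each statement's English description precedes it below -/
import Mathlib

section
/- Let N ≥ 1, T > 0, and let A, B : [0, T] → Matrix (Fin N) (Fin N) ℂ be continuous. Suppose U, V : [0, T] → Matrix (Fin N) (Fin N) ℂ are differentiable with U′(t) = −A(t) · U(t) and V′(t) = −B(t) · V(t) for all t ∈ [0, T], U(T) = V(T) = Id, and U(t) is invertible for every t ∈ [0, T]. Then Id − U(0)⁻¹ · V(0) = ∫₀ᵀ U(t)⁻¹ · (A(t) − B(t)) · V(t) dt. In particular, if U(0) = V(0), then ∫₀ᵀ U(t)⁻¹ · (A(t) − B(t)) · V(t) dt = 0. -/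
/-!
Differentiating `U⁻¹` gives `(U⁻¹)' = -U⁻¹ U' U⁻¹ = U⁻¹ A`, so `W = U⁻¹ V` satisfies
`W' = U⁻¹ A V - U⁻¹ B V = U⁻¹ (A - B) V`. Since `W T = 1`, the fundamental theorem of calculus
turns this into `1 - W 0 = ∫₀ᵀ U⁻¹ (A - B) V`, and `W 0 = 1` when `U 0 = V 0`.
-/

open Matrix intervalIntegral Set

attribute [local instance] Matrix.normedAddCommGroup Matrix.normedSpace

theorem intervalIntegral.integral_eq_sub_of_hasDerivWithinAt_Icc {E : Type*}
    [NormedAddCommGroup E] [NormedSpace ℝ E] [CompleteSpace E] {f f' : ℝ → E} {a b : ℝ}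
    (hab : a ≤ b) (hf : ∀ x ∈ Icc a b, HasDerivWithinAt f (f' x) (Icc a b) x)
    (hf' : IntervalIntegrable f' MeasureTheory.volume a b) :
    ∫ x in a..b, f' x = f b - f a :=
  integral_eq_sub_of_hasDeriv_right_of_le hab (fun x hx => (hf x hx).continuousWithinAt)
    (fun x hx => (hf x (Ioo_subset_Icc_self hx)).mono_of_mem_nhdsWithin
      (Icc_mem_nhdsGT_of_mem ⟨hx.1.le, hx.2⟩)) hf'

namespace Matrix

variable {l m n 𝕜 : Type*} [Fintype m] [Fintype n] [RCLike 𝕜] {s : Set ℝ} {t : ℝ}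

theorem hasDerivWithinAt_mul [Fintype l] {f : ℝ → Matrix l m 𝕜} {g : ℝ → Matrix m n 𝕜}
    {f' : Matrix l m 𝕜} {g' : Matrix m n 𝕜}
    (hf : HasDerivWithinAt f f' s t) (hg : HasDerivWithinAt g g' s t) :
    HasDerivWithinAt (fun x => f x * g x) (f' * g t + f t * g') s t := by
  rw [add_comm]
  exact (mulLinearMap ℝ).toContinuousBilinearMap.hasDerivWithinAt_of_bilinear hf hg

variable [DecidableEq n]

theorem hasDerivWithinAt_inv {f : ℝ → Matrix n n 𝕜} {f' : Matrix n n 𝕜}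
    (hf : HasDerivWithinAt f f' s t) (ht : t ∈ s) (hunit : ∀ x ∈ s, IsUnit (f x)) :
    HasDerivWithinAt (fun x => (f x)⁻¹) (-((f t)⁻¹ * f' * (f t)⁻¹)) s t := by
  have hinv : ContinuousWithinAt (fun x => (f x)⁻¹) s t := by
    refine (continuousAt_matrix_inv _ ?_).comp_continuousWithinAt hf.continuousWithinAt
    have hdet := ((isUnit_iff_isUnit_det _).mp (hunit t ht)).ne_zero
    simpa [Ring.inverse_eq_inv'] using continuousAt_inv₀ hdet
  have hslope := hasDerivWithinAt_iff_tendsto_slope.mp hf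
  have hlim := (((hinv.mono_left (nhdsWithin_mono _ sdiff_subset)).mul hslope).mul
    (tendsto_const_nhds (x := (f t)⁻¹))).neg
  -- `(f x)⁻¹ - (f t)⁻¹ = -(f x)⁻¹ * (f x - f t) * (f t)⁻¹`, so the slopes of `f⁻¹` follow those of `f`.
  refine hasDerivWithinAt_iff_tendsto_slope.mpr (hlim.congr' ?_)
  filter_upwards [self_mem_nhdsWithin] with x hx
  rw [slope_def_module, slope_def_module, inv_sub_inv (by simp [hunit x hx.1, hunit t ht]),
    ← neg_sub (f x), mul_neg, neg_mul, mul_smul_comm, smul_mul_assoc, smul_neg]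

theorem hasDerivWithinAt_inv_mul_of_transport {A B U V : ℝ → Matrix n n 𝕜}
    (hU : HasDerivWithinAt U (-(A t * U t)) s t) (hV : HasDerivWithinAt V (-(B t * V t)) s t)
    (ht : t ∈ s) (hunit : ∀ x ∈ s, IsUnit (U x)) :
    HasDerivWithinAt (fun x => (U x)⁻¹ * V x) ((U t)⁻¹ * (A t - B t) * V t) s t := by
  convert hasDerivWithinAt_mul (hasDerivWithinAt_inv hU ht hunit) hV using 1
  have hconj : (U t)⁻¹ * (A t * U t) * (U t)⁻¹ = (U t)⁻¹ * A t := by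
    rw [← Matrix.mul_assoc, mul_nonsing_inv_cancel_right _ _
      ((isUnit_iff_isUnit_det _).mp (hunit t ht))]
  simp only [mul_neg, neg_mul, neg_neg, hconj]
  noncomm_ring

end Matrix

theorem pseudo_linearization_integral_identity_general
    (N : ℕ) (T : ℝ) (hT : 0 < T)
    (A B U V : ℝ → Matrix (Fin N) (Fin N) ℂ)
    (hA : ContinuousOn A (Set.Icc 0 T))
    (hB : ContinuousOn B (Set.Icc 0 T))
    (hU : ∀ t ∈ Set.Icc (0 : ℝ) T,
      HasDerivWithinAt U (-(A t * U t)) (Set.Icc 0 T) t)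
    (hV : ∀ t ∈ Set.Icc (0 : ℝ) T,
      HasDerivWithinAt V (-(B t * V t)) (Set.Icc 0 T) t)
    (hUT : U T = 1) (hVT : V T = 1)
    (hUinv : ∀ t ∈ Set.Icc (0 : ℝ) T, IsUnit (U t)) :
    (1 - (U 0)⁻¹ * V 0 = ∫ t in (0 : ℝ)..T, (U t)⁻¹ * (A t - B t) * V t) ∧
      (U 0 = V 0 → (∫ t in (0 : ℝ)..T, (U t)⁻¹ * (A t - B t) * V t) = 0) := by
  have hUinv_cont : ContinuousOn (fun t => (U t)⁻¹) (Icc 0 T) := fun t ht =>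
    (hasDerivWithinAt_inv (hU t ht) ht hUinv).continuousWithinAt
  have hV_cont : ContinuousOn V (Icc 0 T) := fun t ht => (hV t ht).continuousWithinAt
  have hftc := integral_eq_sub_of_hasDerivWithinAt_Icc hT.le
    (fun t ht => hasDerivWithinAt_inv_mul_of_transport (hU t ht) (hV t ht) ht hUinv)
    (((hUinv_cont.mul (hA.sub hB)).mul hV_cont).intervalIntegrable_of_Icc hT.le)
  rw [hUT, hVT, inv_one, Matrix.one_mul] at hftc
  refine ⟨hftc.symm, fun h0 => ?_⟩
  have hdet := (isUnit_iff_isUnit_det _).mp (hUinv 0 ⟨le_rfl, hT.le⟩)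
  rw [hftc, ← h0, nonsing_inv_mul _ hdet, sub_self]

/-- Integral form of the pseudo-linearization identity: if `U' + A U = 0`,
`V' + B V = 0`, `U T = V T = Id` and `U` is invertible, then
`Id - U(0)⁻¹ V(0) = ∫₀ᵀ U(t)⁻¹ (A(t) - B(t)) V(t) dt`; in particular equal scattering
data `U 0 = V 0` forces the integral to vanish. -/
theorem pseudo_linearization_integral_identity
    (N : ℕ) (hN : 1 ≤ N) (T : ℝ) (hT : 0 < T)
    (A B U V : ℝ → Matrix (Fin N) (Fin N) ℂ)
    (hA : ContinuousOn A (Set.Icc 0 T))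
    (hB : ContinuousOn B (Set.Icc 0 T))
    (hU : ∀ t ∈ Set.Icc (0 : ℝ) T,
      HasDerivWithinAt U (-(A t * U t)) (Set.Icc 0 T) t)
    (hV : ∀ t ∈ Set.Icc (0 : ℝ) T,
      HasDerivWithinAt V (-(B t * V t)) (Set.Icc 0 T) t)
    (hUT : U T = 1) (hVT : V T = 1)
    (hUinv : ∀ t ∈ Set.Icc (0 : ℝ) T, IsUnit (U t)) :
    (1 - (U 0)⁻¹ * V 0 = ∫ t in (0 : ℝ)..T, (U t)⁻¹ * (A t - B t) * V t) ∧
      (U 0 = V 0 → (∫ t in (0 : ℝ)..T, (U t)⁻¹ * (A t - B t) * V t) = 0) :=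
  pseudo_linearization_integral_identity_general N T hT A B U V hA hB hU hV hUT hVT hUinv
end

section
/- Let N ≥ 1, T > 0, and let A, B : [0, T] → Matrix (Fin N) (Fin N) ℂ be continuous. Suppose U, V : [0, T] → Matrix (Fin N) (Fin N) ℂ are differentiable with U′(t) = −A(t) · U(t) and V′(t) = −B(t) · V(t) for all t ∈ [0, T], U(T) = V(T) = Id, and V(t) is invertible for every t ∈ [0, T]. Define w(t) := U(t) · V(t)⁻¹ − Id. Then w is differentiable with w′(t) + A(t) · w(t) − w(t) · B(t) = −(A(t) − B(t)) for all t ∈ [0, T] and w(T) = 0. Moreover, if U(0) = V(0), then w(0) = 0. -/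
open Matrix

attribute [local instance] Matrix.normedAddCommGroup Matrix.normedSpace

/-! If `U' = -a U` and `V' = -b V`, then `(V⁻¹)' = -V⁻¹ V' V⁻¹ = V⁻¹ b`, so the product rule gives
`(U V⁻¹)' = -a (U V⁻¹) + (U V⁻¹) b`. Subtracting the identity, `w = U V⁻¹ - 1` satisfies
`w' = -(a w - w b) - (a - b)`, and `w` vanishes wherever `U = V`, in particular at `T` and, under
equal scattering data, at `0`. -/

section BanachAlgebra

variable {𝕜 𝔸 : Type*} [NontriviallyNormedField 𝕜] [NormedRing 𝔸] [NormedAlgebra 𝕜 𝔸]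
  [HasSummableGeomSeries 𝔸] {s : Set 𝕜} {t : 𝕜}

theorem HasDerivWithinAt.ringInverse {V : 𝕜 → 𝔸} {V' : 𝔸} (hV : HasDerivWithinAt V V' s t)
    (ht : IsUnit (V t)) :
    HasDerivWithinAt (fun y ↦ Ring.inverse (V y))
      (-(Ring.inverse (V t) * V' * Ring.inverse (V t))) s t := by
  obtain ⟨u, hu⟩ := ht
  simpa [← hu, Function.comp_def] using
    (hu ▸ hasFDerivAt_ringInverse (𝕜 := 𝕜) u).comp_hasDerivWithinAt t hV

theorem HasDerivWithinAt.mul_ringInverse_of_linear {U V : 𝕜 → 𝔸} {a b : 𝔸}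
    (hU : HasDerivWithinAt U (-(a * U t)) s t) (hV : HasDerivWithinAt V (-(b * V t)) s t)
    (ht : IsUnit (V t)) :
    HasDerivWithinAt (fun y ↦ U y * Ring.inverse (V y))
      (-(a * (U t * Ring.inverse (V t))) + U t * Ring.inverse (V t) * b) s t := by
  convert hU.fun_mul (hV.ringInverse ht) using 1
  simp only [neg_mul, mul_neg, neg_neg, mul_assoc, Ring.mul_inverse_cancel _ ht, mul_one]

end BanachAlgebra

theorem HasDerivWithinAt.matrix_mul_nonsing_inv_of_linear {𝕜 α n : Type*}
    [NontriviallyNormedField 𝕜] [NormedCommRing α] [NormedAlgebra 𝕜 α] [CompleteSpace α]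
    [Fintype n] [DecidableEq n] {s : Set 𝕜} {t : 𝕜} {U V : 𝕜 → Matrix n n α}
    {a b : Matrix n n α} (hU : HasDerivWithinAt U (-(a * U t)) s t)
    (hV : HasDerivWithinAt V (-(b * V t)) s t) (ht : IsUnit (V t)) :
    HasDerivWithinAt (fun y ↦ U y * (V y)⁻¹) (-(a * (U t * (V t)⁻¹)) + U t * (V t)⁻¹ * b) s t := by
  -- The operator norm makes matrices a Banach algebra and induces the same topology as the sup
  -- norm, and derivatives depend only on the topology.
  open scoped Matrix.Norms.Operator in
  have : HasSummableGeomSeries (Matrix n n α) :=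
    @instHasSummableGeomSeriesOfCompleteSpace _ _ (Matrix.instCompleteSpace n n α)
  simp only [Matrix.nonsing_inv_eq_ringInverse]
  exact open scoped Matrix.Norms.Operator in hU.mul_ringInverse_of_linear hV ht

theorem pseudo_linearization_transport_problem_general
    (N : ℕ) (T : ℝ) (hT : 0 < T)
    (A B U V : ℝ → Matrix (Fin N) (Fin N) ℂ)
    (hU : ∀ t ∈ Set.Icc (0 : ℝ) T,
      HasDerivWithinAt U (-(A t * U t)) (Set.Icc 0 T) t)
    (hV : ∀ t ∈ Set.Icc (0 : ℝ) T,
      HasDerivWithinAt V (-(B t * V t)) (Set.Icc 0 T) t)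
    (hUT : U T = 1) (hVT : V T = 1)
    (hVinv : ∀ t ∈ Set.Icc (0 : ℝ) T, IsUnit (V t)) :
    (∀ t ∈ Set.Icc (0 : ℝ) T,
      HasDerivWithinAt (fun s => U s * (V s)⁻¹ - 1)
        (-(A t * (U t * (V t)⁻¹ - 1)) + (U t * (V t)⁻¹ - 1) * B t - (A t - B t))
        (Set.Icc 0 T) t) ∧
      U T * (V T)⁻¹ - 1 = 0 ∧
      (U 0 = V 0 → U 0 * (V 0)⁻¹ - 1 = 0) := by
  refine ⟨fun t ht ↦ ?_, by simp [hUT, hVT], fun h0 ↦ ?_⟩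
  · have hderiv : -(A t * (U t * (V t)⁻¹ - 1)) + (U t * (V t)⁻¹ - 1) * B t - (A t - B t) =
        -(A t * (U t * (V t)⁻¹)) + U t * (V t)⁻¹ * B t := by
      noncomm_ring
    rw [hderiv]
    exact ((hU t ht).matrix_mul_nonsing_inv_of_linear (hV t ht) (hVinv t ht)).sub_const 1
  · have hV0 := (isUnit_iff_isUnit_det _).mp (hVinv 0 ⟨le_rfl, hT.le⟩)
    rw [h0, mul_nonsing_inv _ hV0, sub_self]

/-- Single-curve pseudo-linearization identity: `w := U V⁻¹ - Id` solves the
terminal-value transport problem `w' + A w - w B = -(A - B)`, `w T = 0`, and equal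
scattering data `U 0 = V 0` forces `w 0 = 0`. -/
theorem pseudo_linearization_transport_problem
    (N : ℕ) (hN : 1 ≤ N) (T : ℝ) (hT : 0 < T)
    (A B U V : ℝ → Matrix (Fin N) (Fin N) ℂ)
    (hA : ContinuousOn A (Set.Icc 0 T))
    (hB : ContinuousOn B (Set.Icc 0 T))
    (hU : ∀ t ∈ Set.Icc (0 : ℝ) T,
      HasDerivWithinAt U (-(A t * U t)) (Set.Icc 0 T) t)
    (hV : ∀ t ∈ Set.Icc (0 : ℝ) T,
      HasDerivWithinAt V (-(B t * V t)) (Set.Icc 0 T) t)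
    (hUT : U T = 1) (hVT : V T = 1)
    (hVinv : ∀ t ∈ Set.Icc (0 : ℝ) T, IsUnit (V t)) :
    (∀ t ∈ Set.Icc (0 : ℝ) T,
      HasDerivWithinAt (fun s => U s * (V s)⁻¹ - 1)
        (-(A t * (U t * (V t)⁻¹ - 1)) + (U t * (V t)⁻¹ - 1) * B t - (A t - B t))
        (Set.Icc 0 T) t) ∧
      U T * (V T)⁻¹ - 1 = 0 ∧
      (U 0 = V 0 → U 0 * (V 0)⁻¹ - 1 = 0) :=
  pseudo_linearization_transport_problem_general N T hT A B U V hU hV hUT hVT hVinv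
end
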